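/- Let f₁(t) = a₁ e^{k₁ t} + b₁ and f₃(t) = a₃ e^{k₃ t} + b₃ with a₁, a₃ ≠ 0 and k₁, k₃ < 0. If f₁ and f₃ agree at three distinct points c₁ < c₂ < c₃, then f₁ = f₃ identically. -/

import Mathlib

/-!
The difference `f₁ - f₃` vanishes at `c₁ < c₂ < c₃`, so by Rolle's theorem its derivative
`a₁ k₁ e^{k₁ t} - a₃ k₃ e^{k₃ t}` vanishes at two distinct points. As `a₁ k₁ ≠ 0`, the function
`e^{(k₁ - k₃) t}` then takes the same value twice, which forces `k₁ = k₃`. Two exponentials with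
the same nonzero rate that agree at two points have the same coefficients.
-/

open Real Set

lemma exp_mul_injective {k : ℝ} (hk : k ≠ 0) : Function.Injective fun t => exp (k * t) :=
  exp_injective.comp (mul_right_injective₀ hk)

lemma hasDerivAt_mul_exp_mul (a k x : ℝ) :
    HasDerivAt (fun t => a * exp (k * t)) (a * k * exp (k * x)) x := by
  have := (((hasDerivAt_id x).const_mul k).exp).const_mul a
  simpa [mul_comm, mul_left_comm, mul_assoc] using this

lemma exists_mul_exp_deriv_eq {a b k l x y : ℝ} (hxy : x < y)
    (h : a * exp (k * x) - b * exp (l * x) = a * exp (k * y) - b * exp (l * y)) :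
    ∃ t ∈ Ioo x y, a * k * exp (k * t) = b * l * exp (l * t) := by
  have hderiv (t : ℝ) : HasDerivAt (fun s => a * exp (k * s) - b * exp (l * s))
      (a * k * exp (k * t) - b * l * exp (l * t)) t :=
    (hasDerivAt_mul_exp_mul a k t).sub (hasDerivAt_mul_exp_mul b l t)
  obtain ⟨t, ht, hzero⟩ := exists_hasDerivAt_eq_zero hxy
    (Continuous.continuousOn (by fun_prop)) h (fun t _ => hderiv t)
  exact ⟨t, ht, sub_eq_zero.mp hzero⟩

lemma eq_of_mul_exp_eq_mul_exp {a b k l s t : ℝ} (ha : a ≠ 0) (hst : s ≠ t)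
    (hs : a * exp (k * s) = b * exp (l * s)) (ht : a * exp (k * t) = b * exp (l * t)) :
    k = l := by
  have hratio (u : ℝ) (hu : a * exp (k * u) = b * exp (l * u)) : a * exp ((k - l) * u) = b := by
    rw [sub_mul, exp_sub, mul_div_assoc', hu, mul_div_cancel_right₀ _ (exp_pos _).ne']
  have hexp : exp ((k - l) * s) = exp ((k - l) * t) :=
    mul_left_cancel₀ ha ((hratio s hs).trans (hratio t ht).symm)
  have hprod : (k - l) * (s - t) = 0 := by
    rw [mul_sub, sub_eq_zero]
    exact exp_injective hexp
  exact sub_eq_zero.mp ((mul_eq_zero.mp hprod).resolve_right (sub_ne_zero.mpr hst))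

lemma eq_of_mul_exp_add_eq_at_two {a₁ a₃ b₁ b₃ k c₁ c₂ : ℝ} (hk : k ≠ 0) (hc : c₁ ≠ c₂)
    (h1 : a₁ * exp (k * c₁) + b₁ = a₃ * exp (k * c₁) + b₃)
    (h2 : a₁ * exp (k * c₂) + b₁ = a₃ * exp (k * c₂) + b₃) :
    a₁ = a₃ ∧ b₁ = b₃ := by
  have hexp : exp (k * c₁) - exp (k * c₂) ≠ 0 := sub_ne_zero.mpr ((exp_mul_injective hk).ne hc)
  have hprod : (a₁ - a₃) * (exp (k * c₁) - exp (k * c₂)) = 0 := by linarith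
  have ha : a₁ = a₃ := sub_eq_zero.mp ((mul_eq_zero.mp hprod).resolve_right hexp)
  subst ha
  exact ⟨rfl, by linarith⟩

theorem stmt_6_general (a₁ a₃ b₁ b₃ k₁ k₃ c₁ c₂ c₃ : ℝ)
    (ha₁ : a₁ ≠ 0) (hk₁ : k₁ < 0)
    (hc12 : c₁ < c₂) (hc23 : c₂ < c₃)
    (h1 : a₁ * Real.exp (k₁ * c₁) + b₁ = a₃ * Real.exp (k₃ * c₁) + b₃)
    (h2 : a₁ * Real.exp (k₁ * c₂) + b₁ = a₃ * Real.exp (k₃ * c₂) + b₃)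
    (h3 : a₁ * Real.exp (k₁ * c₃) + b₁ = a₃ * Real.exp (k₃ * c₃) + b₃) :
    ∀ t : ℝ, a₁ * Real.exp (k₁ * t) + b₁ = a₃ * Real.exp (k₃ * t) + b₃ := by
  obtain ⟨t₁, ht₁, hd₁⟩ :=
    exists_mul_exp_deriv_eq (a := a₁) (b := a₃) (k := k₁) (l := k₃) hc12 (by linarith)
  obtain ⟨t₂, ht₂, hd₂⟩ :=
    exists_mul_exp_deriv_eq (a := a₁) (b := a₃) (k := k₁) (l := k₃) hc23 (by linarith)
  obtain rfl : k₁ = k₃ :=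
    eq_of_mul_exp_eq_mul_exp (mul_ne_zero ha₁ hk₁.ne) (ht₁.2.trans ht₂.1).ne hd₁ hd₂
  obtain ⟨rfl, rfl⟩ := eq_of_mul_exp_add_eq_at_two hk₁.ne hc12.ne h1 h2
  exact fun _ => rfl

theorem stmt_6 (a₁ a₃ b₁ b₃ k₁ k₃ c₁ c₂ c₃ : ℝ)
    (ha₁ : a₁ ≠ 0) (ha₃ : a₃ ≠ 0) (hk₁ : k₁ < 0) (hk₃ : k₃ < 0)
    (hc12 : c₁ < c₂) (hc23 : c₂ < c₃)
    (h1 : a₁ * Real.exp (k₁ * c₁) + b₁ = a₃ * Real.exp (k₃ * c₁) + b₃)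
    (h2 : a₁ * Real.exp (k₁ * c₂) + b₁ = a₃ * Real.exp (k₃ * c₂) + b₃)
    (h3 : a₁ * Real.exp (k₁ * c₃) + b₁ = a₃ * Real.exp (k₃ * c₃) + b₃) :
    ∀ t : ℝ, a₁ * Real.exp (k₁ * t) + b₁ = a₃ * Real.exp (k₃ * t) + b₃ :=
  stmt_6_general a₁ a₃ b₁ b₃ k₁ k₃ c₁ c₂ c₃ ha₁ hk₁ hc12 hc23 h1 h2 h3
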